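/- Let H ∈ (1/4, 1/2], T > 0, let φ : [0,T]² → ℝ be bounded and measurable, and let 0 ≤ s < t ≤ T. For integers n ≥ 0 and 0 ≤ i ≤ 2ⁿ, set u_{i,n} := s + 2^{−n}(t − s) i. Then for every integer ℓ ≥ 1, |∑_{n=1}^{ℓ} ∑_{i=0}^{2^{n−1}−1} ∫_0^T ∫_0^T φ(η,ζ) ρ_{u_{2i,n}, u_{2i+1,n}}(η) ρ_{u_{2i+1,n}, u_{2i+2,n}}(ζ) dη dζ| ≤ (4 / (2^{4H} − 2)) · (t − s)^{4H} · sup_{(η,ζ) ∈ [0,T]²} |φ(η,ζ)|. -/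

import Mathlib

/-!
Each summand is at most `sup |φ| · ‖ρ_{u_{2i},u_{2i+1}}‖₁ · ‖ρ_{u_{2i+1},u_{2i+2}}‖₁`. The kernel
`ρ_{ab}` is the derivative of `η ↦ (|a - η|^{2H} - |b - η|^{2H}) / 2`; as `2H - 1 ≤ 0` it is
nonpositive off `[a, b]` and nonnegative on it, so its `L¹` norm over `[0, T]` is the total
variation of that primitive, at most `2 (b - a)^{2H}`. Level `n` therefore contributes at most
`2^{n-1} · 4 sup |φ| · ((t - s) / 2^n)^{4H}`, and the geometric series of ratio `2^{1-4H}`, which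
is `< 1` exactly when `H > 1/4`, sums to the constant `4 / (2^{4H} - 2)`.
-/

open MeasureTheory Set
open scoped Interval

theorem Real.monotone_sign : Monotone Real.sign := by
  intro x y hxy
  rcases lt_trichotomy x 0 with hx | rfl | hx
  · rw [Real.sign_of_neg hx]
    rcases Real.sign_apply_eq y with h | h | h <;> rw [h] <;> norm_num
  · rcases hxy.eq_or_lt with rfl | hy
    · rfl
    · rw [Real.sign_zero, Real.sign_of_pos hy]; norm_num
  · rw [Real.sign_of_pos hx, Real.sign_of_pos (hx.trans_le hxy)]

theorem hasDerivAt_abs_rpow_of_ne_zero {x : ℝ} (hx : x ≠ 0) (p : ℝ) :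
    HasDerivAt (fun y : ℝ => |y| ^ p) (p * (Real.sign x * |x| ^ (p - 1))) x := by
  have := (hasDerivAt_abs hx).rpow_const (p := p) (Or.inl (abs_ne_zero.2 hx))
  convert this using 1
  rcases hx.lt_or_gt with hx | hx <;> simp [Real.sign_of_neg, Real.sign_of_pos, hx]

theorem intervalIntegrable_abs_rpow {r : ℝ} (hr : -1 < r) (a b : ℝ) :
    IntervalIntegrable (fun x : ℝ => |x| ^ r) volume a b := by
  have hpos := intervalIntegral.intervalIntegrable_rpow' (a := a) (b := b) hr
  have hneg : IntervalIntegrable (fun x : ℝ => (-x) ^ r) volume a b := by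
    simpa using (IntervalIntegrable.iff_comp_neg (a := -a) (b := -b)).1
      (intervalIntegral.intervalIntegrable_rpow' (a := -a) (b := -b) hr)
  refine (hpos.norm.add hneg.norm).mono_fun
    (continuous_abs.measurable.pow_const r).aestronglyMeasurable (ae_of_all _ fun x => ?_)
  dsimp only
  rw [Real.norm_of_nonneg (by positivity), Real.norm_of_nonneg (by positivity)]
  rcases le_total 0 x with hx | hx
  · rw [abs_of_nonneg hx]
    exact le_add_of_le_of_nonneg (Real.le_norm_self _) (norm_nonneg _)
  · rw [abs_of_nonpos hx]
    exact le_add_of_nonneg_of_le (norm_nonneg _) (Real.le_norm_self _)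

theorem Real.abs_sign_le_one (x : ℝ) : |Real.sign x| ≤ 1 := by
  rcases Real.sign_apply_eq x with h | h | h <;> simp [h]

theorem intervalIntegrable_sign_mul_abs_rpow {r : ℝ} (hr : -1 < r) (c d e : ℝ) :
    IntervalIntegrable (fun η => Real.sign (c - η) * |c - η| ^ r) volume d e := by
  have h := (intervalIntegrable_abs_rpow hr (c - d) (c - e)).comp_sub_left c
  simp only [sub_sub_cancel] at h
  refine h.mono_fun ?_ (ae_of_all _ fun η => ?_)
  · exact ((Real.monotone_sign.measurable.comp (measurable_const.sub measurable_id)).mul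
      ((continuous_abs.measurable.pow_const r).comp
        (measurable_const.sub measurable_id))).aestronglyMeasurable
  · dsimp only
    rw [norm_mul]
    exact mul_le_of_le_one_left (norm_nonneg _) (Real.abs_sign_le_one _)

noncomputable def fbmKernel (H a b η : ℝ) : ℝ :=
  H * (Real.sign (b - η) * |b - η| ^ (2 * H - 1) - Real.sign (a - η) * |a - η| ^ (2 * H - 1))

section fbmKernel

variable {H a b : ℝ}

theorem fbmKernel_intervalIntegrable (hH : 0 < H) (d e : ℝ) :
    IntervalIntegrable (fbmKernel H a b) volume d e :=
  have hr : -1 < 2 * H - 1 := by linarith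
  ((intervalIntegrable_sign_mul_abs_rpow hr b d e).sub
    (intervalIntegrable_sign_mul_abs_rpow hr a d e)).const_mul H

theorem integral_fbmKernel (hH : 0 < H) (d e : ℝ) :
    ∫ η in d..e, fbmKernel H a b η =
      (|a - e| ^ (2 * H) - |b - e| ^ (2 * H)) / 2 - (|a - d| ^ (2 * H) - |b - d| ^ (2 * H)) / 2 := by
  have hcont : ∀ c : ℝ, Continuous fun η : ℝ => |c - η| ^ (2 * H) := fun c =>
    (continuous_const.sub continuous_id).abs.rpow_const fun _ => Or.inr (by positivity)
  have hderiv : ∀ c η : ℝ, η ≠ c → HasDerivAt (fun η => |c - η| ^ (2 * H))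
      (-(2 * H * (Real.sign (c - η) * |c - η| ^ (2 * H - 1)))) η := fun c η hne => by
    refine ((hasDerivAt_abs_rpow_of_ne_zero (sub_ne_zero.2 hne.symm) (2 * H)).comp η
      ((hasDerivAt_id η).const_sub c)).congr_deriv ?_
    simp
  refine integral_eq_of_hasDerivAt_off_countable _ _ ((countable_singleton a).insert b)
    (((hcont a).sub (hcont b)).div_const 2).continuousOn (fun η hη => ?_)
    (fbmKernel_intervalIntegrable hH d e)
  simp only [mem_sdiff, mem_insert_iff, mem_singleton_iff, not_or] at hη
  refine (((hderiv a η hη.2.2).sub (hderiv b η hη.2.1)).div_const 2).congr_deriv ?_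
  unfold fbmKernel
  ring

theorem fbmKernel_nonpos_of_lt_left (hH0 : 0 ≤ H) (hH1 : H ≤ 1 / 2) (hab : a ≤ b) {η : ℝ}
    (hη : η < a) : fbmKernel H a b η ≤ 0 := by
  have ha : 0 < a - η := sub_pos.2 hη
  have hb : 0 < b - η := by linarith
  rw [fbmKernel, Real.sign_of_pos ha, Real.sign_of_pos hb, abs_of_pos ha, abs_of_pos hb, one_mul,
    one_mul]
  exact mul_nonpos_of_nonneg_of_nonpos hH0
    (sub_nonpos.2 (Real.rpow_le_rpow_of_nonpos ha (by linarith) (by linarith)))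

theorem fbmKernel_nonpos_of_right_lt (hH0 : 0 ≤ H) (hH1 : H ≤ 1 / 2) (hab : a ≤ b) {η : ℝ}
    (hη : b < η) : fbmKernel H a b η ≤ 0 := by
  have ha : a - η < 0 := by linarith
  have hb : b - η < 0 := sub_neg.2 hη
  rw [fbmKernel, Real.sign_of_neg ha, Real.sign_of_neg hb, abs_of_neg ha, abs_of_neg hb]
  refine mul_nonpos_of_nonneg_of_nonpos hH0 ?_
  have := Real.rpow_le_rpow_of_nonpos (neg_pos.2 hb) (by linarith : -(b - η) ≤ -(a - η))
    (by linarith : 2 * H - 1 ≤ 0)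
  linarith

theorem fbmKernel_nonneg_of_mem_Ioo (hH0 : 0 ≤ H) {η : ℝ} (hη : η ∈ Ioo a b) :
    0 ≤ fbmKernel H a b η := by
  have ha : a - η < 0 := sub_neg.2 hη.1
  have hb : 0 < b - η := sub_pos.2 hη.2
  rw [fbmKernel, Real.sign_of_neg ha, Real.sign_of_pos hb]
  have := Real.rpow_nonneg (abs_nonneg (a - η)) (2 * H - 1)
  have := Real.rpow_nonneg (abs_nonneg (b - η)) (2 * H - 1)
  exact mul_nonneg hH0 (by linarith)

theorem integral_abs_fbmKernel_le {T : ℝ} (hH0 : 0 < H) (hH1 : H ≤ 1 / 2) (ha : 0 ≤ a)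
    (hab : a ≤ b) (hbT : b ≤ T) :
    ∫ η in (0 : ℝ)..T, |fbmKernel H a b η| ≤ 2 * (b - a) ^ (2 * H) := by
  have hi : ∀ d e, IntervalIntegrable (fun η => |fbmKernel H a b η|) volume d e :=
    fun d e => (fbmKernel_intervalIntegrable hH0 d e).abs
  have hleft : ∫ η in (0 : ℝ)..a, |fbmKernel H a b η| = -∫ η in (0 : ℝ)..a, fbmKernel H a b η := by
    rw [← intervalIntegral.integral_neg]
    refine intervalIntegral.integral_congr_ae ?_
    filter_upwards [Measure.ae_ne volume a] with η hne hη
    rw [uIoc_of_le ha] at hη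
    exact abs_of_nonpos (fbmKernel_nonpos_of_lt_left hH0.le hH1 hab (lt_of_le_of_ne hη.2 hne))
  have hmid : ∫ η in a..b, |fbmKernel H a b η| = ∫ η in a..b, fbmKernel H a b η := by
    refine intervalIntegral.integral_congr_ae ?_
    filter_upwards [Measure.ae_ne volume b] with η hne hη
    rw [uIoc_of_le hab] at hη
    exact abs_of_nonneg (fbmKernel_nonneg_of_mem_Ioo hH0.le ⟨hη.1, lt_of_le_of_ne hη.2 hne⟩)
  have hright : ∫ η in b..T, |fbmKernel H a b η| = -∫ η in b..T, fbmKernel H a b η := by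
    rw [← intervalIntegral.integral_neg]
    refine intervalIntegral.integral_congr_ae (ae_of_all _ fun η hη => ?_)
    rw [uIoc_of_le hbT] at hη
    exact abs_of_nonpos (fbmKernel_nonpos_of_right_lt hH0.le hH1 hab hη.1)
  have h2H : (2 * H) ≠ 0 := by positivity
  have hmono₁ : a ^ (2 * H) ≤ b ^ (2 * H) := Real.rpow_le_rpow ha hab (by positivity)
  have hmono₂ : (T - b) ^ (2 * H) ≤ (T - a) ^ (2 * H) :=
    Real.rpow_le_rpow (by linarith) (by linarith) (by positivity)
  rw [← intervalIntegral.integral_add_adjacent_intervals ((hi 0 a).trans (hi a b)) (hi b T),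
    ← intervalIntegral.integral_add_adjacent_intervals (hi 0 a) (hi a b),
    hleft, hmid, hright, integral_fbmKernel hH0, integral_fbmKernel hH0, integral_fbmKernel hH0]
  rw [abs_sub_comm a b, abs_sub_comm a T, abs_sub_comm b T]
  simp only [sub_self, sub_zero, abs_zero, Real.zero_rpow h2H, abs_of_nonneg ha,
    abs_of_nonneg (ha.trans hab), abs_of_nonneg (sub_nonneg.2 hab),
    abs_of_nonneg (sub_nonneg.2 hbT), abs_of_nonneg (sub_nonneg.2 (hab.trans hbT))]
  linarith

end fbmKernel

theorem abs_integral_integral_mul_le {a b M : ℝ} (hab : a ≤ b) {φ : ℝ → ℝ → ℝ}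
    (hφ : ∀ η ∈ Icc a b, ∀ ζ ∈ Icc a b, |φ η ζ| ≤ M) {f g : ℝ → ℝ}
    (hf : IntervalIntegrable f volume a b) (hg : IntervalIntegrable g volume a b) :
    |∫ ζ in a..b, ∫ η in a..b, φ η ζ * f η * g ζ|
      ≤ M * (∫ η in a..b, |f η|) * ∫ ζ in a..b, |g ζ| := by
  have hinner : ∀ ζ ∈ Icc a b,
      |∫ η in a..b, φ η ζ * f η * g ζ| ≤ M * (∫ η in a..b, |f η|) * |g ζ| := by
    intro ζ hζ
    calc |∫ η in a..b, φ η ζ * f η * g ζ|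
        ≤ ∫ η in a..b, M * |f η| * |g ζ| :=
          intervalIntegral.norm_integral_le_of_norm_le (f := fun η => φ η ζ * f η * g ζ) hab
            (ae_of_all _ fun η hη => by
            rw [Real.norm_eq_abs, abs_mul, abs_mul]
            exact mul_le_mul_of_nonneg_right (mul_le_mul_of_nonneg_right
              (hφ η (Ioc_subset_Icc_self hη) ζ hζ) (abs_nonneg (f η))) (abs_nonneg (g ζ)))
            ((hf.abs.const_mul M).mul_const _)
      _ = M * (∫ η in a..b, |f η|) * |g ζ| := by
          rw [intervalIntegral.integral_mul_const, intervalIntegral.integral_const_mul]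
  calc |∫ ζ in a..b, ∫ η in a..b, φ η ζ * f η * g ζ|
      ≤ ∫ ζ in a..b, M * (∫ η in a..b, |f η|) * |g ζ| :=
        intervalIntegral.norm_integral_le_of_norm_le (f := fun ζ => ∫ η in a..b, φ η ζ * f η * g ζ)
          hab (ae_of_all _ fun ζ hζ => hinner ζ (Ioc_subset_Icc_self hζ)) (hg.abs.const_mul _)
    _ = M * (∫ η in a..b, |f η|) * ∫ ζ in a..b, |g ζ| :=
        intervalIntegral.integral_const_mul _ _

theorem abs_integral_integral_mul_fbmKernel_le {H T M a b c : ℝ} (hH0 : 0 < H)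
    (hH1 : H ≤ 1 / 2) {φ : ℝ → ℝ → ℝ} (hφ : ∀ η ∈ Icc 0 T, ∀ ζ ∈ Icc 0 T, |φ η ζ| ≤ M)
    {ρ : ℝ → ℝ → ℝ → ℝ}
    (hρ : ∀ a b : ℝ, a < b → ∀ η : ℝ, 0 ≤ η → η ≠ a → η ≠ b → ρ a b η = fbmKernel H a b η)
    (ha : 0 ≤ a) (hab : a < b) (hbc : b < c) (hcT : c ≤ T) :
    |∫ ζ in (0 : ℝ)..T, ∫ η in (0 : ℝ)..T, φ η ζ * ρ a b η * ρ b c ζ|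
      ≤ M * (2 * (b - a) ^ (2 * H)) * (2 * (c - b) ^ (2 * H)) := by
  have hT : 0 ≤ T := by linarith
  have hM : 0 ≤ M := (abs_nonneg _).trans (hφ 0 ⟨le_rfl, hT⟩ 0 ⟨le_rfl, hT⟩)
  have hρ_ae : ∀ {a b : ℝ}, 0 ≤ a → a < b →
      fbmKernel H a b =ᵐ[volume.restrict (Ι 0 T)] ρ a b := fun {a b} ha hab => by
    rw [Filter.EventuallyEq, ae_restrict_iff' measurableSet_uIoc]
    filter_upwards [Measure.ae_ne volume a, Measure.ae_ne volume b] with η hηa hηb hη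
    rw [uIoc_of_le hT] at hη
    exact (hρ a b hab η hη.1.le hηa hηb).symm
  have hL1 : ∀ {a b : ℝ}, 0 ≤ a → a < b → b ≤ T →
      ∫ η in (0 : ℝ)..T, |ρ a b η| ≤ 2 * (b - a) ^ (2 * H) := fun {a b} ha hab hbT => by
    rw [← intervalIntegral.integral_congr_ae_restrict
      ((hρ_ae ha hab).mono fun η h => congrArg abs h)]
    exact integral_abs_fbmKernel_le hH0 hH1 ha hab.le hbT
  calc _ ≤ M * (∫ η in (0 : ℝ)..T, |ρ a b η|) * ∫ ζ in (0 : ℝ)..T, |ρ b c ζ| :=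
        abs_integral_integral_mul_le hT hφ
          ((fbmKernel_intervalIntegrable hH0 0 T).congr_ae (hρ_ae ha hab))
          ((fbmKernel_intervalIntegrable hH0 0 T).congr_ae (hρ_ae (ha.trans hab.le) hbc))
    _ ≤ M * (2 * (b - a) ^ (2 * H)) * (2 * (c - b) ^ (2 * H)) :=
        mul_le_mul (mul_le_mul_of_nonneg_left (hL1 ha hab (hbc.le.trans hcT)) hM)
          (hL1 (ha.trans hab.le) hbc hcT)
          (intervalIntegral.integral_nonneg hT fun _ _ => abs_nonneg _) (by positivity)

theorem sum_Icc_two_pow_mul_div_two_pow_rpow_le {p x : ℝ} (hp : 1 < p) (hx : 0 ≤ x) (ℓ : ℕ) :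
    ∑ n ∈ Finset.Icc 1 ℓ, (2 : ℝ) ^ (n - 1) * (x / 2 ^ n) ^ p ≤ x ^ p / (2 ^ p - 2) := by
  have hP : 2 < (2 : ℝ) ^ p := by
    simpa using Real.rpow_lt_rpow_of_exponent_lt one_lt_two hp
  set q : ℝ := 2 / 2 ^ p
  have hq0 : 0 ≤ q := by positivity
  have hq1 : q < 1 := (div_lt_one (by linarith)).2 hP
  have hterm : ∀ n ∈ Finset.Icc 1 ℓ, (2 : ℝ) ^ (n - 1) * (x / 2 ^ n) ^ p = x ^ p / 2 * q ^ n := by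
    intro n hn
    have h2n : (2 : ℝ) ^ n = 2 * 2 ^ (n - 1) := by
      rw [← pow_succ']; congr 1; have := (Finset.mem_Icc.1 hn).1; omega
    rw [Real.div_rpow hx (by positivity), ← Real.rpow_pow_comm zero_le_two, div_pow, h2n]
    field_simp
  rw [Finset.sum_congr rfl hterm, ← Finset.mul_sum, ← Finset.Ico_add_one_right_eq_Icc]
  calc x ^ p / 2 * ∑ n ∈ Finset.Ico 1 (ℓ + 1), q ^ n ≤ x ^ p / 2 * (q ^ 1 / (1 - q)) := by
        gcongr
        exact geom_sum_Ico_le_of_lt_one hq0 hq1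
    _ = x ^ p / (2 ^ p - 2) := by
        have : (2 : ℝ) ^ p - 2 ≠ 0 := by linarith
        simp only [q]
        field_simp

theorem abs_integral_integral_mul_dyadic_le {H T M s t : ℝ} (hH0 : 0 < H) (hH1 : H ≤ 1 / 2)
    {φ : ℝ → ℝ → ℝ} (hφ : ∀ η ∈ Icc 0 T, ∀ ζ ∈ Icc 0 T, |φ η ζ| ≤ M)
    {ρ : ℝ → ℝ → ℝ → ℝ}
    (hρ : ∀ a b : ℝ, a < b → ∀ η : ℝ, 0 ≤ η → η ≠ a → η ≠ b → ρ a b η = fbmKernel H a b η)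
    (hs : 0 ≤ s) (hst : s < t) (ht : t ≤ T) {u : ℕ → ℕ → ℝ}
    (hu : ∀ i n : ℕ, u i n = s + 2 ^ (-(n : ℝ)) * (t - s) * i) {n i : ℕ} (hn : 1 ≤ n)
    (hi : i < 2 ^ (n - 1)) :
    |∫ ζ in (0 : ℝ)..T, ∫ η in (0 : ℝ)..T,
        φ η ζ * ρ (u (2 * i) n) (u (2 * i + 1) n) η * ρ (u (2 * i + 1) n) (u (2 * i + 2) n) ζ|
      ≤ 4 * M * ((t - s) / 2 ^ n) ^ (4 * H) := by
  have hδ : 0 < (t - s) / 2 ^ n := by have := sub_pos.2 hst; positivity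
  have hu' : ∀ k : ℕ, u k n = s + (t - s) / 2 ^ n * k := fun k => by
    rw [hu, Real.rpow_neg zero_le_two, Real.rpow_natCast]; ring
  have hstep : ∀ k : ℕ, u (k + 1) n - u k n = (t - s) / 2 ^ n := fun k => by
    rw [hu', hu']; push_cast; ring
  have hlast : (t - s) / 2 ^ n * (2 * i + 2 : ℕ) ≤ t - s := by
    have h2n : 2 * i + 2 ≤ 2 ^ n := by
      have : 2 ^ n = 2 * 2 ^ (n - 1) := by rw [← pow_succ']; congr 1; omega
      omega
    calc (t - s) / 2 ^ n * (2 * i + 2 : ℕ) ≤ (t - s) / 2 ^ n * (2 ^ n : ℕ) := by gcongr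
      _ = t - s := by push_cast; field_simp
  have key := abs_integral_integral_mul_fbmKernel_le hH0 hH1 hφ hρ
    (by rw [hu']; positivity) (sub_pos.1 ((hstep (2 * i)).symm ▸ hδ))
    (sub_pos.1 ((hstep (2 * i + 1)).symm ▸ hδ)) (by rw [hu']; linarith)
  rw [hstep, hstep] at key
  calc _ ≤ _ := key
    _ = 4 * M * ((t - s) / 2 ^ n) ^ (4 * H) := by
        rw [show 4 * H = 2 * H + 2 * H by ring, Real.rpow_add hδ]; ring

theorem fbm_density_dyadic_sum_bound_general
    (H : ℝ) (hH0 : 1 / 4 < H) (hH1 : H ≤ 1 / 2)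
    (T : ℝ)
    (φ : ℝ → ℝ → ℝ)
    (hφb : ∃ M : ℝ, ∀ η ∈ Set.Icc (0 : ℝ) T, ∀ ζ ∈ Set.Icc (0 : ℝ) T, |φ η ζ| ≤ M)
    (s t : ℝ) (hs : 0 ≤ s) (hst : s < t) (ht : t ≤ T)
    (ρ : ℝ → ℝ → ℝ → ℝ)
    (hρ : ∀ a b : ℝ, a < b → ∀ η : ℝ, 0 ≤ η → η ≠ a → η ≠ b →
      ρ a b η = H * (Real.sign (b - η) * |b - η| ^ (2 * H - 1)
        - Real.sign (a - η) * |a - η| ^ (2 * H - 1)))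
    (u : ℕ → ℕ → ℝ)
    (hu : ∀ i n : ℕ, u i n = s + 2 ^ (-(n : ℝ)) * (t - s) * i) :
    ∀ ℓ : ℕ, 1 ≤ ℓ →
      |∑ n ∈ Finset.Icc 1 ℓ, ∑ i ∈ Finset.range (2 ^ (n - 1)),
          ∫ ζ in (0 : ℝ)..T, ∫ η in (0 : ℝ)..T,
            φ η ζ * ρ (u (2 * i) n) (u (2 * i + 1) n) η *
              ρ (u (2 * i + 1) n) (u (2 * i + 2) n) ζ|
        ≤ (4 / (2 ^ (4 * H) - 2)) * (t - s) ^ (4 * H) *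
            sSup ((fun q : ℝ × ℝ => |φ q.1 q.2|) ''
              (Set.Icc (0 : ℝ) T ×ˢ Set.Icc (0 : ℝ) T)) := by
  intro ℓ _
  obtain ⟨M₀, hM₀⟩ := hφb
  set M := sSup ((fun q : ℝ × ℝ => |φ q.1 q.2|) '' (Icc (0 : ℝ) T ×ˢ Icc (0 : ℝ) T))
  have hM : ∀ η ∈ Icc (0 : ℝ) T, ∀ ζ ∈ Icc (0 : ℝ) T, |φ η ζ| ≤ M := fun η hη ζ hζ =>
    le_csSup ⟨M₀, by rintro _ ⟨⟨η, ζ⟩, ⟨hη, hζ⟩, rfl⟩; exact hM₀ η hη ζ hζ⟩ ⟨(η, ζ), ⟨hη, hζ⟩, rfl⟩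
  have hsT : s ∈ Icc (0 : ℝ) T := ⟨hs, hst.le.trans ht⟩
  have hM0 : 0 ≤ M := (abs_nonneg _).trans (hM s hsT s hsT)
  calc _ ≤ ∑ n ∈ Finset.Icc 1 ℓ, ∑ _i ∈ Finset.range (2 ^ (n - 1)),
        4 * M * ((t - s) / 2 ^ n) ^ (4 * H) :=
        (Finset.abs_sum_le_sum_abs _ _).trans <| Finset.sum_le_sum fun n hn =>
          (Finset.abs_sum_le_sum_abs _ _).trans <| Finset.sum_le_sum fun i hi =>
            abs_integral_integral_mul_dyadic_le (by linarith) hH1 hM hρ hs hst ht hu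
              (Finset.mem_Icc.1 hn).1 (Finset.mem_range.1 hi)
    _ = 4 * M * ∑ n ∈ Finset.Icc 1 ℓ, (2 : ℝ) ^ (n - 1) * ((t - s) / 2 ^ n) ^ (4 * H) := by
        rw [Finset.mul_sum]
        refine Finset.sum_congr rfl fun n _ => ?_
        rw [Finset.sum_const, Finset.card_range, nsmul_eq_mul]
        push_cast
        ring
    _ ≤ 4 * M * ((t - s) ^ (4 * H) / (2 ^ (4 * H) - 2)) := by
        gcongr
        exact sum_Icc_two_pow_mul_div_two_pow_rpow_le (by linarith) (sub_pos.2 hst).le ℓ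
    _ = _ := by ring

/-- For `H ∈ (1/4,1/2]`, a bounded measurable `φ : [0,T]² → ℝ`, `0 ≤ s < t ≤ T`, and the
dyadic points `u_{i,n} = s + 2^{−n}(t − s) i`, for every `ℓ ≥ 1`,
`|∑_{n=1}^{ℓ} ∑_{i=0}^{2^{n−1}−1} ∫_0^T ∫_0^T φ(η,ζ) ρ_{u_{2i,n},u_{2i+1,n}}(η)
    ρ_{u_{2i+1,n},u_{2i+2,n}}(ζ) dη dζ|
  ≤ (4 / (2^{4H} − 2)) (t − s)^{4H} sup_{(η,ζ) ∈ [0,T]²} |φ(η,ζ)|`,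
where `ρ_{ab}(η) = H (sgn(b − η)|b − η|^{2H−1} − sgn(a − η)|a − η|^{2H−1})` (set to `0` at
`η ∈ {a, b}`). -/
theorem fbm_density_dyadic_sum_bound
    (H : ℝ) (hH0 : 1 / 4 < H) (hH1 : H ≤ 1 / 2)
    (T : ℝ) (hT : 0 < T)
    (φ : ℝ → ℝ → ℝ) (hφm : Measurable fun q : ℝ × ℝ => φ q.1 q.2)
    (hφb : ∃ M : ℝ, ∀ η ∈ Set.Icc (0 : ℝ) T, ∀ ζ ∈ Set.Icc (0 : ℝ) T, |φ η ζ| ≤ M)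
    (s t : ℝ) (hs : 0 ≤ s) (hst : s < t) (ht : t ≤ T)
    (ρ : ℝ → ℝ → ℝ → ℝ)
    (hρ : ∀ a b : ℝ, a < b → ∀ η : ℝ, 0 ≤ η → η ≠ a → η ≠ b →
      ρ a b η = H * (Real.sign (b - η) * |b - η| ^ (2 * H - 1)
        - Real.sign (a - η) * |a - η| ^ (2 * H - 1)))
    (hρa : ∀ a b : ℝ, ρ a b a = 0) (hρb : ∀ a b : ℝ, ρ a b b = 0)
    (u : ℕ → ℕ → ℝ)
    (hu : ∀ i n : ℕ, u i n = s + 2 ^ (-(n : ℝ)) * (t - s) * i) :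
    ∀ ℓ : ℕ, 1 ≤ ℓ →
      |∑ n ∈ Finset.Icc 1 ℓ, ∑ i ∈ Finset.range (2 ^ (n - 1)),
          ∫ ζ in (0 : ℝ)..T, ∫ η in (0 : ℝ)..T,
            φ η ζ * ρ (u (2 * i) n) (u (2 * i + 1) n) η *
              ρ (u (2 * i + 1) n) (u (2 * i + 2) n) ζ|
        ≤ (4 / (2 ^ (4 * H) - 2)) * (t - s) ^ (4 * H) *
            sSup ((fun q : ℝ × ℝ => |φ q.1 q.2|) ''
              (Set.Icc (0 : ℝ) T ×ˢ Set.Icc (0 : ℝ) T)) :=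
  fbm_density_dyadic_sum_bound_general H hH0 hH1 T φ hφb s t hs hst ht ρ hρ u hu
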